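/- Let \(A\) be a symmetric \(3\times3\) complex matrix, \(\xi\in\mathbb{R}^3\) nonzero, and suppose the quantity \(-2|A\xi|^2|\xi|^2+\tfrac12|\xi^T A\xi|^2+\tfrac12\,\xi^T A\xi\cdot\overline{\operatorname{tr}A}\,|\xi|^2+\tfrac12\,\xi^T\bar A\xi\cdot\operatorname{tr}A\,|\xi|^2-\tfrac12|\operatorname{tr}A|^2|\xi|^4+|A|^2|\xi|^4\) equals zero. Then there exist \(\alpha\in\mathbb{C}\) and \(\beta\in\mathbb{C}^3\) such that \(a_{ij}=\alpha\,\delta_{ij}+\beta_i\xi_j+\beta_j\xi_i\) for all \(i,j\). -/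

import Mathlib

/-!
Let `Π` be the orthogonal projection onto the plane `ξ^⊥`. For symmetric `A` the integrand equals
`|ξ|⁴ ‖T‖²`, where `T` is the traceless part of the compression `Π A Π` of `A` to that plane and
`‖·‖` is the Frobenius norm. So it vanishes only if `Π A Π = c Π`, and expanding `Π A Π` shows that
this means `A = α I + β ξᵀ + ξ βᵀ` with `α = c` and `β` read off from `A ξ` and `ξ`.
-/

open Finset

noncomputable def secondVariationIntegrand (A : Matrix (Fin 3) (Fin 3) ℂ) (ξ : Fin 3 → ℝ) : ℂ :=
  let ξC : Fin 3 → ℂ := fun i => (ξ i : ℂ)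
  let n2 : ℂ := ((∑ i, ξ i ^ 2 : ℝ) : ℂ)
  let Aξ2 : ℂ := ((∑ i, Complex.normSq (∑ j, A i j * ξC j) : ℝ) : ℂ)
  let q : ℂ := ∑ i, ∑ j, A i j * ξC i * ξC j
  let qbar : ℂ := ∑ i, ∑ j, (starRingEnd ℂ) (A i j) * ξC i * ξC j
  let trA : ℂ := ∑ i, A i i
  let nA2 : ℂ := ((∑ i, ∑ j, Complex.normSq (A i j) : ℝ) : ℂ)
  (-2) * Aξ2 * n2 + (1 / 2) * ((Complex.normSq q : ℝ) : ℂ)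
    + (1 / 2) * q * (starRingEnd ℂ) trA * n2 + (1 / 2) * qbar * trA * n2
    - (1 / 2) * ((Complex.normSq trA : ℝ) : ℂ) * n2 ^ 2 + nA2 * n2 ^ 2

open Matrix ComplexConjugate

section ScaledIdempotent

variable {m R : Type*} [Fintype m] [CommRing R] {P : Matrix m m R} {c : R}

theorem trace_mul_mul_of_mul_self_eq_smul (hP : P * P = c • P) (A : Matrix m m R) :
    trace (P * A * P) = c * trace (A * P) := by
  rw [trace_mul_cycle, hP, Matrix.smul_mul, trace_smul, smul_eq_mul, trace_mul_comm]

theorem trace_mul_mul_mul_of_mul_self_eq_smul (hP : P * P = c • P) (A : Matrix m m R) :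
    trace (P * A * P * P) = c ^ 2 * trace (A * P) := by
  rw [mul_assoc _ P P, hP, Matrix.mul_smul, trace_smul, trace_mul_mul_of_mul_self_eq_smul hP,
    smul_eq_mul]
  ring

theorem trace_mul_mul_mul_mul_mul_of_mul_self_eq_smul (hP : P * P = c • P)
    (A B : Matrix m m R) :
    trace (P * A * P * (P * B * P)) = c ^ 2 * trace (A * P * B * P) := by
  have h : P * A * P * (P * B * P) = c • (P * (A * P * B * P)) := by
    simp only [← mul_assoc]
    rw [mul_assoc (P * A) P P, hP]
    simp only [Matrix.mul_smul, Matrix.smul_mul, mul_assoc]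
  rw [h, trace_smul, trace_mul_comm, mul_assoc _ P P, hP, Matrix.mul_smul, trace_smul,
    smul_eq_mul, smul_eq_mul]
  ring

end ScaledIdempotent

section ScaledPerpProj

variable {m R : Type*} [Fintype m] [DecidableEq m] [CommRing R]

/-- For real `u` this is `|u|²` times the orthogonal projection onto `u^⊥`; the scaling keeps
everything polynomial in `u`. -/
def scaledPerpProj (u : m → R) : Matrix m m R :=
  (u ⬝ᵥ u) • 1 - vecMulVec u u

theorem scaledPerpProj_mul_self (u : m → R) :
    scaledPerpProj u * scaledPerpProj u = (u ⬝ᵥ u) • scaledPerpProj u := by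
  simp only [scaledPerpProj, sub_mul, mul_sub, Matrix.smul_mul, Matrix.mul_smul, one_mul,
    mul_one, vecMulVec_mul_vecMulVec, vecMulVec_smul, smul_sub]
  module

theorem trace_scaledPerpProj (u : m → R) :
    trace (scaledPerpProj u) = ((Fintype.card m : R) - 1) * (u ⬝ᵥ u) := by
  simp only [scaledPerpProj, trace_sub, trace_smul, trace_one, trace_vecMulVec, smul_eq_mul]
  ring

theorem conjTranspose_scaledPerpProj [StarRing R] {u : m → R} (hu : star u = u) :
    (scaledPerpProj u)ᴴ = scaledPerpProj u := by
  rw [scaledPerpProj, conjTranspose_sub, conjTranspose_smul, conjTranspose_one,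
    conjTranspose_vecMulVec, hu, ← star_dotProduct_star, hu]

theorem scaledPerpProj_mul_mul_scaledPerpProj {A : Matrix m m R} (hA : A.IsSymm) (u : m → R) :
    scaledPerpProj u * A * scaledPerpProj u = (u ⬝ᵥ u) ^ 2 • A - (u ⬝ᵥ u) • vecMulVec u (A *ᵥ u)
      - (u ⬝ᵥ u) • vecMulVec (A *ᵥ u) u + (u ⬝ᵥ A *ᵥ u) • vecMulVec u u := by
  have hPA : scaledPerpProj u * A = (u ⬝ᵥ u) • A - vecMulVec u (A *ᵥ u) := by
    rw [scaledPerpProj, sub_mul, Matrix.smul_mul, one_mul, vecMulVec_mul, ← mulVec_transpose,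
      hA.eq]
  rw [hPA, scaledPerpProj, mul_sub, sub_mul, sub_mul, Matrix.smul_mul, Matrix.smul_mul,
    Matrix.mul_smul, Matrix.mul_smul, mul_one, mul_one, mul_vecMulVec, vecMulVec_mul_vecMulVec,
    vecMulVec_smul, dotProduct_comm (A *ᵥ u)]
  module

theorem trace_mul_scaledPerpProj (A : Matrix m m R) (u : m → R) :
    trace (A * scaledPerpProj u) = (u ⬝ᵥ u) * trace A - u ⬝ᵥ A *ᵥ u := by
  rw [scaledPerpProj, mul_sub, Matrix.mul_smul, mul_one, mul_vecMulVec, trace_sub, trace_smul,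
    trace_vecMulVec, smul_eq_mul, dotProduct_comm (A *ᵥ u)]

theorem trace_mul_scaledPerpProj_mul_mul_scaledPerpProj {A B : Matrix m m R} (hA : A.IsSymm)
    (hB : B.IsSymm) (u : m → R) :
    trace (A * scaledPerpProj u * B * scaledPerpProj u) = (u ⬝ᵥ u) ^ 2 * trace (A * B)
      - 2 * (u ⬝ᵥ u) * ((A *ᵥ u) ⬝ᵥ (B *ᵥ u)) + (u ⬝ᵥ A *ᵥ u) * (u ⬝ᵥ B *ᵥ u) := by
  have huB : u ᵥ* B = B *ᵥ u := by rw [← mulVec_transpose, hB.eq]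
  rw [trace_mul_cycle, ← Matrix.mul_assoc _ A, scaledPerpProj_mul_mul_scaledPerpProj hA]
  simp only [add_mul, sub_mul, Matrix.smul_mul, vecMulVec_mul, trace_add, trace_sub, trace_smul,
    trace_vecMulVec, smul_eq_mul, huB]
  rw [dotProduct_comm u ((A *ᵥ u) ᵥ* B), ← dotProduct_mulVec]
  ring

theorem Matrix.IsSymm.exists_eq_smul_one_add_vecMulVec_add_vecMulVec {K : Type*} [Field K]
    [NeZero (2 : K)] {A : Matrix m m K} (hA : A.IsSymm) {u : m → K} (hu : u ⬝ᵥ u ≠ 0) {c : K}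
    (h : scaledPerpProj u * A * scaledPerpProj u = c • scaledPerpProj u) :
    ∃ (α : K) (β : m → K), A = α • 1 + vecMulVec β u + vecMulVec u β := by
  set n := u ⬝ᵥ u
  set w := A *ᵥ u
  set q := u ⬝ᵥ w
  rw [scaledPerpProj_mul_mul_scaledPerpProj hA, scaledPerpProj] at h
  refine ⟨c / n, n⁻¹ • w - ((q + c) / (2 * n ^ 2)) • u, ?_⟩
  simp only [vecMulVec_sub, sub_vecMulVec, smul_vecMulVec, vecMulVec_smul]
  linear_combination (norm := skip) (n ^ 2)⁻¹ • h
  match_scalars <;> field_simp <;> ring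

/-- `(d - 1) |u|⁶` times the traceless part of the compression of `A` to `u^⊥`, where
`d = card m`. -/
def perpTracelessPart (u : m → R) (A : Matrix m m R) : Matrix m m R :=
  (((Fintype.card m : R) - 1) * (u ⬝ᵥ u)) • (scaledPerpProj u * A * scaledPerpProj u)
    - trace (scaledPerpProj u * A * scaledPerpProj u) • scaledPerpProj u

theorem trace_perpTracelessPart_mul_conjTranspose [StarRing R] {u : m → R} (hu : star u = u)
    (A : Matrix m m R) :
    trace (perpTracelessPart u A * (perpTracelessPart u A)ᴴ) =
      ((Fintype.card m : R) - 1) * (u ⬝ᵥ u) ^ 4 *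
        (((Fintype.card m : R) - 1) * trace (A * scaledPerpProj u * Aᴴ * scaledPerpProj u)
          - trace (A * scaledPerpProj u) * trace (Aᴴ * scaledPerpProj u)) := by
  unfold perpTracelessPart
  set P := scaledPerpProj u
  set n := u ⬝ᵥ u
  set k : R := (Fintype.card m : R) - 1
  have hP : P * P = n • P := scaledPerpProj_mul_self u
  have hn : star n = n := by rw [← star_dotProduct_star, hu]
  have hk : star k = k := by simp [k]
  have hPH : Pᴴ = P := conjTranspose_scaledPerpProj hu
  have hPAP (B : Matrix m m R) : (P * B * P)ᴴ = P * Bᴴ * P := by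
    rw [conjTranspose_mul, conjTranspose_mul, hPH, mul_assoc]
  rw [conjTranspose_sub, conjTranspose_smul, conjTranspose_smul, hPAP, hPH, star_mul, hk, hn,
    ← trace_conjTranspose, hPAP, trace_mul_mul_of_mul_self_eq_smul hP,
    trace_mul_mul_of_mul_self_eq_smul hP]
  have hPP : trace (P * P) = n * (k * n) := by
    rw [hP, trace_smul, trace_scaledPerpProj, smul_eq_mul]
  have hPBP (B : Matrix m m R) : trace (P * (P * B * P)) = n ^ 2 * trace (B * P) := by
    rw [trace_mul_comm, trace_mul_mul_mul_of_mul_self_eq_smul hP]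
  simp only [sub_mul, mul_sub, Matrix.smul_mul, Matrix.mul_smul, trace_sub, trace_smul,
    smul_eq_mul, trace_mul_mul_mul_mul_mul_of_mul_self_eq_smul hP,
    trace_mul_mul_mul_of_mul_self_eq_smul hP, hPBP, hPP]
  ring

end ScaledPerpProj

open Complex in
theorem two_mul_secondVariationIntegrand {A : Matrix (Fin 3) (Fin 3) ℂ} (hA : A.IsSymm)
    (ξ : Fin 3 → ℝ) :
    2 * secondVariationIntegrand A ξ =
      2 * trace (A * scaledPerpProj (ofReal ∘ ξ) * Aᴴ * scaledPerpProj (ofReal ∘ ξ))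
        - trace (A * scaledPerpProj (ofReal ∘ ξ)) * trace (Aᴴ * scaledPerpProj (ofReal ∘ ξ)) := by
  set u : Fin 3 → ℂ := ofReal ∘ ξ
  have hu : star u = u := funext fun i ↦ conj_ofReal (ξ i)
  have hw_conj : star (A *ᵥ u) = Aᴴ *ᵥ u := by
    rw [star_mulVec, hu, ← mulVec_transpose, hA.conjTranspose.eq]
  have hn : ((∑ i, ξ i ^ 2 : ℝ) : ℂ) = u ⬝ᵥ u := by
    simp [u, dotProduct, sq]
  have hw : ((∑ i, normSq (∑ j, A i j * (ξ j : ℂ)) : ℝ) : ℂ) = (A *ᵥ u) ⬝ᵥ (Aᴴ *ᵥ u) := by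
    rw [← hw_conj]
    push_cast
    simp only [← mul_conj]
    rfl
  have hq : ∑ i, ∑ j, A i j * (ξ i : ℂ) * (ξ j : ℂ) = u ⬝ᵥ A *ᵥ u := by
    simp [u, dotProduct, mulVec, Finset.mul_sum, mul_comm, mul_left_comm]
  have hq_conj : conj (u ⬝ᵥ A *ᵥ u) = u ⬝ᵥ Aᴴ *ᵥ u := by
    rw [← star_def, ← star_dotProduct_star, hw_conj, hu, dotProduct_comm]
  have hqbar : ∑ i, ∑ j, conj (A i j) * (ξ i : ℂ) * (ξ j : ℂ) = u ⬝ᵥ Aᴴ *ᵥ u := by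
    simp only [← hq_conj, ← hq, map_sum, map_mul, conj_ofReal]
  have hnA : ((∑ i, ∑ j, normSq (A i j) : ℝ) : ℂ) = trace (A * Aᴴ) := by
    push_cast
    simp only [← mul_conj]
    rfl
  have htr : conj (trace A) = trace Aᴴ := by rw [trace_conjTranspose, star_def]
  simp only [secondVariationIntegrand]
  rw [hn, hw, hq, hqbar, hnA, ← mul_conj, ← mul_conj, hq_conj, show ∑ i, A i i = trace A from rfl,
    htr, trace_mul_scaledPerpProj_mul_mul_scaledPerpProj hA hA.conjTranspose,
    trace_mul_scaledPerpProj, trace_mul_scaledPerpProj]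
  ring

open scoped ComplexOrder in
/-- If the expression vanishes for a symmetric complex 3×3 matrix `A` and a nonzero
real vector `ξ`, then `a_{ij} = α δ_{ij} + β_i ξ_j + β_j ξ_i`. -/
theorem secondVariationIntegrand_eq_zero (A : Matrix (Fin 3) (Fin 3) ℂ)
    (hA : A.IsSymm) (ξ : Fin 3 → ℝ) (hξ : ξ ≠ 0)
    (h0 : secondVariationIntegrand A ξ = 0) :
    ∃ (α : ℂ) (β : Fin 3 → ℂ), ∀ i j,
      A i j = α * (if i = j then 1 else 0) + β i * (ξ j : ℂ) + β j * (ξ i : ℂ) := by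
  set u : Fin 3 → ℂ := Complex.ofReal ∘ ξ
  have hu : star u = u := funext fun i ↦ Complex.conj_ofReal (ξ i)
  have hn : u ⬝ᵥ u ≠ 0 := by
    have : u ⬝ᵥ u = ((ξ ⬝ᵥ ξ : ℝ) : ℂ) := by simp [u, dotProduct]
    rw [this, Complex.ofReal_ne_zero]
    exact mt dotProduct_self_eq_zero.mp hξ
  have hk : (Fintype.card (Fin 3) : ℂ) - 1 = 2 := by norm_num
  have hN : perpTracelessPart u A = 0 := by
    rw [← trace_mul_conjTranspose_self_eq_zero_iff, trace_perpTracelessPart_mul_conjTranspose hu,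
      hk, ← two_mul_secondVariationIntegrand hA, h0, mul_zero, mul_zero]
  rw [perpTracelessPart, hk, sub_eq_zero] at hN
  have hPAP : scaledPerpProj u * A * scaledPerpProj u =
      ((2 * (u ⬝ᵥ u))⁻¹ * trace (scaledPerpProj u * A * scaledPerpProj u)) • scaledPerpProj u := by
    rw [mul_smul, ← hN, smul_smul, inv_mul_cancel₀ (mul_ne_zero two_ne_zero hn), one_smul]
  obtain ⟨α, β, rfl⟩ := hA.exists_eq_smul_one_add_vecMulVec_add_vecMulVec hn hPAP
  refine ⟨α, β, fun i j ↦ ?_⟩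
  simp only [Matrix.add_apply, Matrix.smul_apply, one_apply, smul_eq_mul, vecMulVec_apply,
    Function.comp_apply, u]
  ring
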